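/- arXiv:2202.00136 — 2 statements merged into one kernel-verified Lean document; each statement's English description precedes it below -/
import Mathlib

section
/- There exists a successful two-stage coding algorithm for the Z-channel of total length 8, with first stage of length n1 = 6 and second stage of length n2 = 2, correcting 1 asymmetric error, whose message set has size 53. -/
/-- Hamming weight of a binary word: the number of ones. -/
def wt {n : ℕ} (a : Fin n → Bool) : ℕ :=
  (Finset.univ.filter (fun i => a i = true)).card

/-- N(a,b) = number of positions where a is 0 and b is 1. -/
def NN {n : ℕ} (a b : Fin n → Bool) : ℕ :=
  (Finset.univ.filter (fun i => a i = false ∧ b i = true)).card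

/-- The Z-distance d_Z(a,b) = max(N(a,b), N(b,a)). -/
def dZ {n : ℕ} (a b : Fin n → Bool) : ℕ := max (NN a b) (NN b a)

/-- A code correcting one asymmetric error: d_Z(a,b) ≥ 2 for distinct codewords. -/
def IsZCode {n : ℕ} (C : Finset (Fin n → Bool)) : Prop :=
  ∀ a ∈ C, ∀ b ∈ C, a ≠ b → 2 ≤ dZ a b

/-- The output ball B_1(a): words obtainable from a by at most one asymmetric (1→0) error. -/
def ball {n : ℕ} (a : Fin n → Bool) : Finset (Fin n → Bool) :=
  Finset.univ.filter (fun y => (∀ i, y i ≤ a i) ∧ wt a - wt y ≤ 1)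

/-- The number of free points of a code: words lying in no ball B_1(a), a ∈ C. -/
def freeCount {n : ℕ} (C : Finset (Fin n → Bool)) : ℕ :=
  (Finset.univ.filter (fun y => ∀ a ∈ C, y ∉ ball a)).card

/-- A two-stage coding algorithm (c1, c2, dec) of lengths n1, n2 with message set `Fin M`
is successful if it correctly decodes under at most one asymmetric error in total. -/
def TwoStageSuccess (n1 n2 M : ℕ)
    (c1 : Fin M → (Fin n1 → Bool))
    (c2 : Fin M → (Fin n1 → Bool) → (Fin n2 → Bool))
    (dec : (Fin n1 → Bool) → (Fin n2 → Bool) → Fin M) : Prop :=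
  ∀ (m : Fin M) (y1 : Fin n1 → Bool) (y2 : Fin n2 → Bool),
    (∀ i, y1 i ≤ c1 m i) → (∀ i, y2 i ≤ c2 m y1 i) →
    (wt (c1 m) - wt y1) + (wt (c2 m y1) - wt y2) ≤ 1 →
    dec y1 y2 = m


def c1Tab : List Nat := [0, 2, 3, 4, 5, 7, 9, 10, 13, 14, 15, 16, 19, 20, 21, 22, 23, 24, 25, 26, 27, 29, 30, 31, 33, 35, 36, 38, 39, 40, 41, 42, 43, 44, 45, 46, 47, 48, 49, 50, 51, 52, 53, 54, 55, 57, 58, 59, 60, 61, 62, 63, 63]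

def c2Tab : List Nat := [0, 33, 16, 2, 260, 1088, 8, 65584, 264192, 17829888, 2483044352, 3, 128, 4294967808, 1116691500032, 2267742740480, 163002598850560, 562958543486976, 281509336973312, 844562371182592, 41658846313185280, 578721348344348672, 2386942987415322624, 10682608685940736000, 12, 73786976294838206656, 18446744073709552384, 5017514388048998051840, 681201365153946322124800, 36893488147419299840, 1209073393567218851905536, 2418441935039617058209792, 178923382486206552687509504, 3636222191809626848100352, 2795055384414954130702860288, 10561327075880852299685298176, 45881454937469310098963693568, 55340232234013556736, 79228162735625266529598177280, 158456325913972390931304808448, 11725768055652896826821372280832, 237684501709892464688102375424, 183175511770758080392424914419712, 692137227951286844447719478525952, 3006867224648054505272258116714496, 41539325620735902039048342978166784, 171349599341478435784723868241887232, 768475147102470985195383414235070464, 2668901433444167385684097349223186432, 12025602916995724726442548818641682432, 46773183672197983032866388214286385152, 282129940199370068363917951585398816768, 80754495025998662299160988034717974528]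

def decTab : List Nat := [0, 1, 3, 11, 2, 4, 6, 24, 1, 2, 1, 7, 2, 5, 12, 25, 3, 4, 13, 26, 4, 5, 8, 14, 5, 9, 15, 27, 5, 10, 16, 28, 6, 7, 17, 29, 6, 8, 18, 30, 7, 9, 19, 31, 10, 20, 32, 0, 8, 9, 33, 0, 8, 10, 21, 34, 9, 10, 22, 35, 10, 23, 10, 36, 11, 13, 17, 37, 12, 14, 18, 38, 12, 15, 19, 39, 12, 16, 20, 40, 13, 14, 15, 41, 14, 16, 21, 42, 15, 16, 22, 43, 16, 23, 16, 44, 17, 18, 17, 19, 18, 20, 21, 45, 19, 20, 22, 46, 20, 23, 20, 47, 21, 22, 48, 0, 21, 23, 21, 49, 22, 23, 22, 50, 23, 51, 23, 52, 24, 26, 29, 37, 24, 25, 30, 38, 25, 27, 31, 39, 25, 28, 32, 40, 26, 27, 33, 41, 28, 34, 42, 0, 27, 28, 35, 43, 28, 36, 28, 44, 29, 30, 31, 33, 30, 32, 34, 45, 31, 32, 35, 46, 32, 36, 32, 47, 33, 34, 35, 48, 34, 36, 34, 49, 35, 36, 35, 50, 36, 51, 36, 52, 37, 38, 39, 41, 38,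 40, 42, 45, 39, 40, 43, 46, 40, 44, 40, 47, 41, 42, 43, 48, 42, 44, 42, 49, 43, 44, 43, 50, 44, 51, 44, 52, 45, 46, 48, 0, 45, 47, 45, 49, 46, 47, 46, 50, 47, 51, 47, 52, 48, 49, 48, 50, 49, 51, 49, 52, 50, 51, 50, 52, 52, 51, 51, 51]

def idx6 (y : Fin 6 → Bool) : Nat :=
  (if y 0 then 1 else 0) + (if y 1 then 2 else 0) + (if y 2 then 4 else 0) +
  (if y 3 then 8 else 0) + (if y 4 then 16 else 0) + (if y 5 then 32 else 0)

def idx2 (y : Fin 2 → Bool) : Nat :=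
  (if y 0 then 1 else 0) + (if y 1 then 2 else 0)

def myc1 (m : Fin 53) : Fin 6 → Bool := fun i => (c1Tab.getD m.val 0).testBit i.val

def myc2 (m : Fin 53) (y1 : Fin 6 → Bool) : Fin 2 → Bool :=
  fun i => (c2Tab.getD m.val 0).testBit (2 * idx6 y1 + i.val)

def mydec (y1 : Fin 6 → Bool) (y2 : Fin 2 → Bool) : Fin 53 :=
  ⟨(decTab.getD (4 * idx6 y1 + idx2 y2) 0) % 53, Nat.mod_lt _ (by norm_num)⟩

set_option maxRecDepth 100000 in
theorem two_stage_length_8_n1_6_n2_2_size_53 :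
    ∃ (c1 : Fin 53 → (Fin 6 → Bool))
      (c2 : Fin 53 → (Fin 6 → Bool) → (Fin 2 → Bool))
      (dec : (Fin 6 → Bool) → (Fin 2 → Bool) → Fin 53),
      TwoStageSuccess 6 2 53 c1 c2 dec :=
  ⟨myc1, myc2, mydec, by unfold TwoStageSuccess; decide⟩
end

section
/- Let C ⊆ {0,1}^n be a code with d_Z(a,b) ≥ 2 for all distinct a, b ∈ C, and let z_i denote the number of codewords of C of weight i. Then for every w with 1 < w < n − 1 the following two inequalities hold: z_w + (w + 1)·z_{w+1} ≤ C(n, w), and (n − w + 1)·z_{w−1} + z_w ≤ C(n, w), where C(n, w) is the binomial coefficient. -/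
section Aux

open Finset

variable {n : ℕ}

def supp (a : Fin n → Bool) : Finset (Fin n) := Finset.univ.filter (fun i => a i = true)

lemma wt_eq (a : Fin n → Bool) : wt a = (supp a).card := rfl

lemma wt_le (a : Fin n → Bool) : wt a ≤ n := by
  calc wt a ≤ (Finset.univ : Finset (Fin n)).card := Finset.card_filter_le _ _
  _ = n := by simp

lemma supp_injective : Function.Injective (supp (n := n)) := by
  intro a b h
  funext i
  have h1 : (i ∈ supp a) = (i ∈ supp b) := by rw [h]
  simp only [supp, Finset.mem_filter, Finset.mem_univ, true_and, eq_iff_iff] at h1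
  cases ha : a i <;> cases hb : b i <;> simp_all

lemma supp_surj (s : Finset (Fin n)) : ∃ a, supp a = s := by
  refine ⟨fun i => decide (i ∈ s), ?_⟩
  ext i; simp [supp]

lemma le_iff_supp {y a : Fin n → Bool} : (∀ i, y i ≤ a i) ↔ supp y ⊆ supp a := by
  simp only [supp, Finset.subset_iff, Finset.mem_filter, Finset.mem_univ, true_and]
  constructor
  · intro h i hi
    have hle := h i
    rw [hi] at hle
    cases ha : a i
    · rw [ha] at hle; exact absurd hle (by simp)
    · rfl
  · intro h i
    cases hy : y i
    · exact Bool.false_le _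
    · rw [h hy]

lemma NN_eq (a b : Fin n → Bool) : NN a b = (supp b \ supp a).card := by
  unfold NN
  congr 1
  ext i
  simp [supp, Finset.mem_sdiff, Bool.not_eq_true, and_comm]

lemma card_filter_eq (p : (Fin n → Bool) → Prop) [DecidablePred p]
    (q : Finset (Fin n) → Prop) [DecidablePred q]
    (h : ∀ y, p y ↔ q (supp y)) :
    (Finset.univ.filter p).card = (Finset.univ.filter q).card := by
  rw [← Finset.card_image_of_injective (Finset.univ.filter p) supp_injective]
  congr 1
  ext s
  simp only [Finset.mem_image, Finset.mem_filter, Finset.mem_univ, true_and]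
  constructor
  · rintro ⟨y, hy, rfl⟩; exact (h y).mp hy
  · intro hs
    obtain ⟨a, rfl⟩ := supp_surj s
    exact ⟨a, (h a).mpr hs, rfl⟩

lemma card_wt (w : ℕ) :
    (Finset.univ.filter (fun y : Fin n → Bool => wt y = w)).card = n.choose w := by
  rw [card_filter_eq (fun y : Fin n → Bool => wt y = w) (fun s : Finset (Fin n) => s.card = w) (fun y => Iff.rfl)]
  have h : Finset.univ.filter (fun s : Finset (Fin n) => s.card = w)
      = Finset.powersetCard w Finset.univ := by
    ext s; simp [Finset.mem_powersetCard]
  rw [h, Finset.card_powersetCard]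
  simp

lemma card_ballw (a : Fin n → Bool) (w : ℕ) (ha : wt a = w + 1) :
    (Finset.univ.filter (fun y : Fin n → Bool => (∀ i, y i ≤ a i) ∧ wt y = w)).card
      = w + 1 := by
  rw [card_filter_eq (fun y : Fin n → Bool => (∀ i, y i ≤ a i) ∧ wt y = w) (fun s : Finset (Fin n) => s ⊆ supp a ∧ s.card = w)
      (fun y => and_congr le_iff_supp Iff.rfl)]
  have h : Finset.univ.filter (fun s : Finset (Fin n) => s ⊆ supp a ∧ s.card = w)
      = Finset.powersetCard w (supp a) := by
    ext s; simp [Finset.mem_powersetCard]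
  rw [h, Finset.card_powersetCard, ← wt_eq, ha, Nat.choose_succ_self_right]

lemma key (n : ℕ) (C : Finset (Fin n → Bool)) (hC : IsZCode C) (w : ℕ) :
    (C.filter (fun a => wt a = w)).card
      + (w + 1) * (C.filter (fun a => wt a = w + 1)).card ≤ n.choose w := by
  classical
  set A := C.filter (fun a => wt a = w) with hA
  set B := C.filter (fun a => wt a = w + 1) with hB
  set D : (Fin n → Bool) → Finset (Fin n → Bool) :=
    fun a => Finset.univ.filter (fun y => (∀ i, y i ≤ a i) ∧ wt y = w) with hDdef
  have hmemD : ∀ a y, y ∈ D a ↔ (supp y ⊆ supp a ∧ wt y = w) := by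
    intro a y
    simp only [hDdef, Finset.mem_filter, Finset.mem_univ, true_and, le_iff_supp]
  -- a codeword of weight w cannot lie below a codeword of weight w+1
  have hsub : ∀ {y b : Fin n → Bool}, b ∈ B → supp y ⊆ supp b → wt y = w → y ∈ C → False := by
    intro y b hb hsupp hwy hyC
    rw [hB, Finset.mem_filter] at hb
    have hne : y ≠ b := by
      intro h; subst h; omega
    have h2 := hC y hyC b hb.1 hne
    have h1 : NN y b = 1 := by
      rw [NN_eq, Finset.card_sdiff_of_subset hsupp, ← wt_eq, ← wt_eq, hb.2, hwy]; omega
    have h0 : NN b y = 0 := by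
      rw [NN_eq, Finset.sdiff_eq_empty_iff_subset.mpr hsupp]; simp
    unfold dZ at h2
    rw [h1, h0] at h2
    simp at h2
  have hdisj : ∀ a ∈ B, ∀ b ∈ B, a ≠ b → Disjoint (D a) (D b) := by
    intro a ha b hb hab
    rw [Finset.disjoint_left]
    intro y hya hyb
    rw [hmemD] at hya hyb
    rw [hB, Finset.mem_filter] at ha hb
    have h2 := hC a ha.1 b hb.1 hab
    have h1 : NN a b ≤ 1 := by
      rw [NN_eq]
      calc (supp b \ supp a).card ≤ (supp b \ supp y).card :=
            Finset.card_le_card (Finset.sdiff_subset_sdiff (Finset.Subset.refl _) hya.1)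
        _ = 1 := by
            rw [Finset.card_sdiff_of_subset hyb.1, ← wt_eq, ← wt_eq, hb.2, hyb.2]; omega
    have h1' : NN b a ≤ 1 := by
      rw [NN_eq]
      calc (supp a \ supp b).card ≤ (supp a \ supp y).card :=
            Finset.card_le_card (Finset.sdiff_subset_sdiff (Finset.Subset.refl _) hyb.1)
        _ = 1 := by
            rw [Finset.card_sdiff_of_subset hya.1, ← wt_eq, ← wt_eq, ha.2, hya.2]; omega
    unfold dZ at h2
    rcases le_max_iff.mp h2 with h | h <;> omega
  have hdisjA : Disjoint A (B.biUnion D) := by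
    rw [Finset.disjoint_left]
    intro y hyA hyBD
    rw [Finset.mem_biUnion] at hyBD
    obtain ⟨b, hb, hyb⟩ := hyBD
    rw [hmemD] at hyb
    rw [hA, Finset.mem_filter] at hyA
    exact hsub hb hyb.1 hyb.2 hyA.1
  have hss : A ∪ B.biUnion D ⊆ Finset.univ.filter (fun y => wt y = w) := by
    intro y hy
    rw [Finset.mem_union] at hy
    simp only [Finset.mem_filter, Finset.mem_univ, true_and]
    rcases hy with hy | hy
    · rw [hA, Finset.mem_filter] at hy; exact hy.2
    · rw [Finset.mem_biUnion] at hy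
      obtain ⟨b, _, hyb⟩ := hy
      exact ((hmemD b y).mp hyb).2
  have hsum : ∑ b ∈ B, (D b).card = (w + 1) * B.card := by
    rw [Finset.sum_congr rfl (fun b hb => ?_), Finset.sum_const, smul_eq_mul, mul_comm]
    rw [hB, Finset.mem_filter] at hb
    exact card_ballw b w hb.2
  calc A.card + (w + 1) * B.card
      = (A ∪ B.biUnion D).card := by
        rw [Finset.card_union_of_disjoint hdisjA, Finset.card_biUnion hdisj, hsum]
    _ ≤ (Finset.univ.filter (fun y : Fin n → Bool => wt y = w)).card :=
        Finset.card_le_card hss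
    _ = n.choose w := card_wt w

lemma wt_neg (a : Fin n → Bool) : wt (fun i => ! a i) = n - wt a := by
  have h := Finset.card_filter_add_card_filter_not
    (s := (Finset.univ : Finset (Fin n))) (p := fun i => a i = true)
  have h2 : (Finset.univ.filter (fun i => (! a i) = true))
      = (Finset.univ.filter (fun i => ¬ a i = true)) := by
    apply Finset.filter_congr; intro i _; simp
  unfold wt
  rw [h2]
  rw [Finset.card_univ, Fintype.card_fin] at h
  omega

lemma NN_neg (a b : Fin n → Bool) : NN (fun i => ! a i) (fun i => ! b i) = NN b a := by
  unfold NN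
  congr 1
  ext i
  cases ha : a i <;> cases hb : b i <;> simp [ha, hb]

lemma wordNeg_inj : Function.Injective (fun a : Fin n → Bool => fun i => ! a i) := by
  intro a b h
  funext i
  have := congrFun h i
  simpa using this

end Aux

theorem weight_distribution_inequalities
    (n : ℕ) (C : Finset (Fin n → Bool)) (hC : IsZCode C)
    (z : ℕ → ℕ) (hz : ∀ i, z i = (C.filter (fun a => wt a = i)).card)
    (w : ℕ) (hw1 : 1 < w) (hw2 : w < n - 1) :
    z w + (w + 1) * z (w + 1) ≤ Nat.choose n w ∧
    (n - w + 1) * z (w - 1) + z w ≤ Nat.choose n w := by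
  constructor
  · rw [hz w, hz (w + 1)]
    exact key n C hC w
  · have hwn : w ≤ n := by omega
    have hC' : IsZCode (C.image (fun a => fun i => ! a i)) := by
      intro a' ha' b' hb' hne
      rw [Finset.mem_image] at ha' hb'
      obtain ⟨a, ha, rfl⟩ := ha'
      obtain ⟨b, hb, rfl⟩ := hb'
      have hab : a ≠ b := fun h => hne (by rw [h])
      have h2 := hC a ha b hb hab
      unfold dZ at h2 ⊢
      rw [NN_neg, NN_neg]
      rwa [max_comm]
    have e1 : ((C.image (fun a => fun i => ! a i)).filter (fun a => wt a = n - w)).card = z w := by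
      rw [hz w, Finset.filter_image,
        Finset.card_image_of_injective _ wordNeg_inj]
      congr 1
      apply Finset.filter_congr
      intro a _
      have hwa := wt_le a
      rw [wt_neg]
      omega
    have e2 : ((C.image (fun a => fun i => ! a i)).filter (fun a => wt a = n - w + 1)).card
        = z (w - 1) := by
      clear e1
      rw [hz (w - 1), Finset.filter_image,
        Finset.card_image_of_injective _ wordNeg_inj]
      congr 1
      apply Finset.filter_congr
      intro a _
      have hwa := wt_le a
      rw [wt_neg]
      omega
    have h := key n (C.image (fun a => fun i => ! a i)) hC' (n - w)
    rw [e1, e2, Nat.choose_symm hwn] at h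
    rwa [Nat.add_comm] at h
end
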